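/- (End-to-end correctness of the S2PHC protocol.) Let G be a commutative group and g an element of G of finite order q. Let X be an l × m integer matrix (the client pool's encoded data), W an m × k integer matrix (the server's encoded first-layer weights), s : Fin m → ℤ the master secret, r : Fin l → ℤ the encryption randomness, and f_b a natural number with 2·f_b < q such that |(X·W)_{i,j}| ≤ f_b for all i, j. Define for each row i the ciphertext ct0_i = g^{r_i} and ct_{i,t} = g^{s_t · r_i} · g^{X_{i,t}}, and for each column j of W the functional key sk_j = ∑_t W_{t,j} · s_t. Then for every i, j, the matrix-product entry (X·W)_{i,j} is the unique integer f with |f| ≤ f_b satisfying g^f = (∏_t ct_{i,t}^{W_{t,j}}) · ct0_i^{−sk_j}. Hence the server recovers exactly the matrix product Z = X·W from the ciphertexts and functional keys. -/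

import Mathlib

open Finset

theorem Finset.prod_zpow_eq_zpow_sum {ι G : Type*} [CommGroup G] (s : Finset ι) (a : ι → ℤ)
    (g : G) : ∏ i ∈ s, g ^ a i = g ^ ∑ i ∈ s, a i := by
  induction s using Finset.cons_induction with
  | empty => simp
  | cons i s hi ih => rw [prod_cons, sum_cons, ih, zpow_add]

/-- SI-FEIP decryption: the masks `g ^ (s t * ρ)` cancel against `ct0 ^ (-⟨w, s⟩)`. -/
theorem feip_decrypt_eq_zpow_dotProduct {ι G : Type*} [Fintype ι] [CommGroup G] (g : G) (ρ : ℤ)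
    (s x w : ι → ℤ) :
    (∏ t, (g ^ (s t * ρ) * g ^ x t) ^ w t) * (g ^ ρ) ^ (-(∑ t, w t * s t)) = g ^ (x ⬝ᵥ w) := by
  simp only [← zpow_add, ← zpow_mul]
  rw [prod_zpow_eq_zpow_sum, ← zpow_add, dotProduct, mul_neg, mul_sum, ← sub_eq_add_neg,
    ← sum_sub_distrib]
  exact congrArg _ (sum_congr rfl fun t _ => by ring)

theorem injOn_zpow_of_two_mul_lt_orderOf {G : Type*} [Group G] {g : G} {b : ℕ}
    (hb : 2 * b < orderOf g) : Set.InjOn (g ^ · : ℤ → G) {n | |n| ≤ b} := by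
  intro a ha c hc h
  have hdvd : (orderOf g : ℤ) ∣ a - c := orderOf_dvd_sub_iff_zpow_eq_zpow.mpr h
  have hlt : |a - c| < orderOf g :=
    calc |a - c| ≤ |a| + |c| := abs_sub _ _
      _ ≤ 2 * b := by rw [two_mul]; exact add_le_add ha hc
      _ < orderOf g := by exact_mod_cast hb
  exact sub_eq_zero.mp (Int.eq_zero_of_abs_lt_dvd hdvd hlt)

/-- End-to-end correctness of the S2PHC protocol: from the SI-FEIP ciphertexts
of the rows of `X` and the functional keys for the columns of `W`, each entry
of `X·W` is the unique integer `f` with `|f| ≤ f_b` matching the decryption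
expression, provided `2·f_b` is less than the order of `g` and all entries of
`X·W` are bounded by `f_b`. -/
theorem s2phc_correct
    {G : Type*} [CommGroup G] (g : G) (q : ℕ) (hq : orderOf g = q)
    (l m k : ℕ)
    (X : Matrix (Fin l) (Fin m) ℤ) (W : Matrix (Fin m) (Fin k) ℤ)
    (s : Fin m → ℤ) (r : Fin l → ℤ)
    (f_b : ℕ) (hfb : 2 * f_b < q)
    (hbound : ∀ (i : Fin l) (j : Fin k), |(X * W) i j| ≤ (f_b : ℤ)) :
    ∀ (i : Fin l) (j : Fin k) (f : ℤ),
      (|f| ≤ (f_b : ℤ) ∧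
        g ^ f =
          (∏ t, (g ^ (s t * r i) * g ^ X i t) ^ W t j) *
            (g ^ r i) ^ (-(∑ t, W t j * s t))) ↔
      f = (X * W) i j := by
  intro i j f
  rw [feip_decrypt_eq_zpow_dotProduct g (r i) s (X i) (fun t => W t j), ← Matrix.mul_apply']
  constructor
  · rintro ⟨hf, hdec⟩
    exact injOn_zpow_of_two_mul_lt_orderOf (hq ▸ hfb) hf (hbound i j) hdec
  · rintro rfl
    exact ⟨hbound i j, rfl⟩
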